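/- Let (X,d) be an unbounded metric space and let r̃ be a scaling sequence. A set C of vertices of the cluster graph G_{X,r̃} is a maximal clique in G_{X,r̃} if and only if there exists a pretangent space Ω^X_{∞,r̃} to (X,d) at infinity with respect to r̃ such that C equals Ω^X_{∞,r̃} (as a set of equivalence classes of sequences). -/
import Mathlib


open Filter Topology
open scoped Classical

/-- An unbounded metric space. -/
def UnboundedSpace (X : Type*) [MetricSpace X] : Prop :=
  ¬ Bornology.IsBounded (Set.univ : Set X)

/-- A scaling sequence: positive reals tending to infinity. -/
def ScalingSeq (r : ℕ → ℝ) : Prop :=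
  (∀ n, 0 < r n) ∧ Filter.Tendsto r Filter.atTop Filter.atTop

/-- Two sequences are mutually stable w.r.t. `r` if `d(x_n, y_n)/r_n` has a finite limit. -/
def MutuallyStable {X : Type*} [MetricSpace X] (r : ℕ → ℝ) (x y : ℕ → X) : Prop :=
  ∃ L : ℝ, Filter.Tendsto (fun n => dist (x n) (y n) / r n) Filter.atTop (nhds L)

/-- `Seq(X, r̃)`: sequences going to infinity such that `d(x_n, p)/r_n` has a finite limit. -/
def SeqInf {X : Type*} [MetricSpace X] (r : ℕ → ℝ) (p : X) : Set (ℕ → X) :=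
  {x | Filter.Tendsto (fun n => dist (x n) p) Filter.atTop Filter.atTop ∧
    ∃ L : ℝ, Filter.Tendsto (fun n => dist (x n) p / r n) Filter.atTop (nhds L)}

/-- The relation `x̃ ≡ ỹ`, i.e. `d(x_n, y_n)/r_n → 0`. -/
def EquivSeq {X : Type*} [MetricSpace X] (r : ℕ → ℝ) (x y : ℕ → X) : Prop :=
  Filter.Tendsto (fun n => dist (x n) (y n) / r n) Filter.atTop (nhds 0)

/-- The `≡`-equivalence class of `x` inside `Seq(X, r̃)`. -/
def classOf {X : Type*} [MetricSpace X] (r : ℕ → ℝ) (p : X) (x : ℕ → X) : Set (ℕ → X) :=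
  {y | y ∈ SeqInf r p ∧ EquivSeq r x y}

/-- The vertex set of the cluster graph `G_{X, r̃}`: all `≡`-classes of `Seq(X, r̃)`. -/
def VertexSet {X : Type*} [MetricSpace X] (r : ℕ → ℝ) (p : X) : Set (Set (ℕ → X)) :=
  {v | ∃ x ∈ SeqInf r p, v = classOf r p x}

/-- Adjacency in the cluster graph `G_{X, r̃}`: distinct classes whose representatives
are mutually stable. -/
def AdjacentCl {X : Type*} [MetricSpace X] (r : ℕ → ℝ) (p : X) (u v : Set (ℕ → X)) : Prop :=
  u ∈ VertexSet r p ∧ v ∈ VertexSet r p ∧ u ≠ v ∧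
    ∀ x ∈ u, ∀ y ∈ v, MutuallyStable r x y

/-- The weight `ρ_X` on the cluster graph: for an edge `{u,v}` it is the (unique) limit
`lim d(x_n, y_n)/r_n` for representatives. -/
noncomputable def rhoX {X : Type*} [MetricSpace X] (r : ℕ → ℝ) (u v : Set (ℕ → X)) : ℝ :=
  sSup {L : ℝ | ∃ x ∈ u, ∃ y ∈ v,
    Filter.Tendsto (fun n => dist (x n) (y n) / r n) Filter.atTop (nhds L)}

/-- The root `ν₀ = X̃⁰_{∞,r̃}`: sequences with `d(z_n,p) → ∞` and `d(z_n,p)/r_n → 0`. -/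
def rootClass {X : Type*} [MetricSpace X] (r : ℕ → ℝ) (p : X) : Set (ℕ → X) :=
  {z | Filter.Tendsto (fun n => dist (z n) p) Filter.atTop Filter.atTop ∧
    Filter.Tendsto (fun n => dist (z n) p / r n) Filter.atTop (nhds 0)}

/-- The labeling `ρ⁰` of vertices: `ρ⁰(v) = lim d(x_n,p)/r_n` for `x̃ ∈ v`. -/
noncomputable def rho0 {X : Type*} [MetricSpace X] (r : ℕ → ℝ) (p : X)
    (v : Set (ℕ → X)) : ℝ :=
  sSup {L : ℝ | ∃ x ∈ v, Filter.Tendsto (fun n => dist (x n) p / r n) Filter.atTop (nhds L)}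

/-- A self-stable family: a subset of `Seq(X, r̃)` any two of whose members are
mutually stable. -/
def SelfStable {X : Type*} [MetricSpace X] (r : ℕ → ℝ) (p : X) (F : Set (ℕ → X)) : Prop :=
  F ⊆ SeqInf r p ∧ ∀ x ∈ F, ∀ y ∈ F, MutuallyStable r x y

/-- A maximal self-stable set `X̃_{∞, r̃}`. -/
def MaxSelfStable {X : Type*} [MetricSpace X] (r : ℕ → ℝ) (p : X) (F : Set (ℕ → X)) : Prop :=
  SelfStable r p F ∧ ∀ F', SelfStable r p F' → F ⊆ F' → F = F'

/-- The pretangent space `Ω^X_{∞,r̃}` attached to a maximal self-stable set `F`: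
the set of `≡`-classes of members of `F`. -/
def PretangentCl {X : Type*} [MetricSpace X] (r : ℕ → ℝ) (F : Set (ℕ → X)) :
    Set (Set (ℕ → X)) :=
  {v | ∃ x ∈ F, v = {y | y ∈ F ∧ EquivSeq r x y}}

/-- A clique in the cluster graph `G_{X, r̃}`. -/
def IsCliqueCl {X : Type*} [MetricSpace X] (r : ℕ → ℝ) (p : X)
    (C : Set (Set (ℕ → X))) : Prop :=
  C ⊆ VertexSet r p ∧ ∀ u ∈ C, ∀ v ∈ C, u ≠ v → AdjacentCl r p u v

section Aux

variable {X : Type*} [MetricSpace X] {r : ℕ → ℝ} {p : X}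

lemma equivSeq_refl (x : ℕ → X) : EquivSeq r x x := by
  unfold EquivSeq
  have : (fun n => dist (x n) (x n) / r n) = fun _ => (0 : ℝ) := by
    funext n; simp
  rw [this]
  exact tendsto_const_nhds

lemma equivSeq_symm {x y : ℕ → X} (h : EquivSeq r x y) : EquivSeq r y x := by
  simpa [EquivSeq, dist_comm] using h

lemma mutuallyStable_symm {x y : ℕ → X} (h : MutuallyStable r x y) :
    MutuallyStable r y x := by
  obtain ⟨L, hL⟩ := h
  exact ⟨L, by simpa [dist_comm] using hL⟩

lemma tendsto_perturb {x x' y : ℕ → X} {L : ℝ}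
    (h : EquivSeq r x x')
    (hL : Filter.Tendsto (fun n => dist (x' n) (y n) / r n) Filter.atTop (nhds L)) :
    Filter.Tendsto (fun n => dist (x n) (y n) / r n) Filter.atTop (nhds L) := by
  have hd : Filter.Tendsto
      (fun n => dist (x n) (y n) / r n - dist (x' n) (y n) / r n) Filter.atTop (nhds 0) := by
    apply squeeze_zero_norm (a := fun n => |dist (x n) (x' n) / r n|)
    · intro n
      have e : dist (x n) (y n) / r n - dist (x' n) (y n) / r n
          = (dist (x n) (y n) - dist (x' n) (y n)) / r n := by ring
      rw [Real.norm_eq_abs, e, abs_div, abs_div, abs_of_nonneg dist_nonneg]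
      rcases eq_or_ne (r n) 0 with h0 | h0
      · simp [h0]
      · gcongr
        exact abs_dist_sub_le _ _ _
    · simpa using h.abs
  have h2 := hL.add hd
  have e : (fun n => dist (x' n) (y n) / r n
      + (dist (x n) (y n) / r n - dist (x' n) (y n) / r n))
      = fun n => dist (x n) (y n) / r n := by funext n; ring
  rw [e] at h2
  simpa using h2

lemma mutuallyStable_perturb {x x' y y' : ℕ → X}
    (hx : EquivSeq r x x') (hy : EquivSeq r y y')
    (h : MutuallyStable r x' y') : MutuallyStable r x y := by
  obtain ⟨L, hL⟩ := h
  refine ⟨L, tendsto_perturb hx ?_⟩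
  have h1 : Filter.Tendsto (fun n => dist (y n) (x' n) / r n) Filter.atTop (nhds L) :=
    tendsto_perturb hy (by simpa [dist_comm] using hL)
  simpa [dist_comm] using h1

lemma mem_of_stable_all {F : Set (ℕ → X)} (hF : MaxSelfStable r p F) {y : ℕ → X}
    (hyS : y ∈ SeqInf r p) (hy : ∀ z ∈ F, MutuallyStable r y z) : y ∈ F := by
  have hss : SelfStable r p (insert y F) := by
    constructor
    · rintro z (rfl | hz)
      · exact hyS
      · exact hF.1.1 hz
    · rintro a (rfl | ha) b (rfl | hb)
      · exact ⟨0, equivSeq_refl _⟩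
      · exact hy b hb
      · exact mutuallyStable_symm (hy a ha)
      · exact hF.1.2 a ha b hb
  have := hF.2 _ hss (Set.subset_insert y F)
  rw [this]
  exact Set.mem_insert y F

lemma classOf_eq {F : Set (ℕ → X)} (hF : MaxSelfStable r p F) {x : ℕ → X} (hx : x ∈ F) :
    {y | y ∈ F ∧ EquivSeq r x y} = classOf r p x := by
  ext y
  constructor
  · rintro ⟨hyF, hxy⟩
    exact ⟨hF.1.1 hyF, hxy⟩
  · rintro ⟨hyS, hxy⟩
    refine ⟨mem_of_stable_all hF hyS fun z hz => ?_, hxy⟩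
    exact mutuallyStable_perturb (equivSeq_symm hxy) (equivSeq_refl z) (hF.1.2 x hx z hz)

lemma pretangent_isClique {F : Set (ℕ → X)} (hF : MaxSelfStable r p F) :
    IsCliqueCl r p (PretangentCl r F) := by
  constructor
  · rintro v ⟨x, hx, rfl⟩
    exact ⟨x, hF.1.1 hx, classOf_eq hF hx⟩
  · rintro u hu v hv huv
    obtain ⟨x, hx, rfl⟩ := hu
    obtain ⟨x', hx', rfl⟩ := hv
    refine ⟨⟨x, hF.1.1 hx, classOf_eq hF hx⟩,
      ⟨x', hF.1.1 hx', classOf_eq hF hx'⟩, huv, ?_⟩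
    rintro a ⟨haF, hxa⟩ b ⟨hbF, hxb⟩
    exact mutuallyStable_perturb (equivSeq_symm hxa) (equivSeq_symm hxb)
      (hF.1.2 x hx x' hx')

lemma exists_maxSelfStable (F₀ : Set (ℕ → X)) (h₀ : SelfStable r p F₀) :
    ∃ F, MaxSelfStable r p F ∧ F₀ ⊆ F := by
  have hch : ∀ c ⊆ {F | SelfStable r p F}, IsChain (· ⊆ ·) c → c.Nonempty →
      ∃ ub ∈ {F | SelfStable r p F}, ∀ s ∈ c, s ⊆ ub := by
    intro c hc hchain hne
    refine ⟨⋃₀ c, ⟨?_, ?_⟩, fun s hs => Set.subset_sUnion_of_mem hs⟩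
    · rintro x ⟨s, hs, hxs⟩
      exact (hc hs).1 hxs
    · rintro x ⟨s, hs, hxs⟩ y ⟨t, ht, hyt⟩
      rcases hchain.total hs ht with h | h
      · exact (hc ht).2 x (h hxs) y hyt
      · exact (hc hs).2 x hxs y (h hyt)
  obtain ⟨F, hsub, hmax⟩ := zorn_subset_nonempty {F | SelfStable r p F} hch F₀ h₀
  exact ⟨F, ⟨hmax.prop, fun F' hF' hsub' =>
    le_antisymm hsub' (hmax.2 hF' hsub')⟩, hsub⟩

lemma sUnion_clique_selfStable {C : Set (Set (ℕ → X))} (hC : IsCliqueCl r p C) :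
    SelfStable r p (⋃₀ C) := by
  constructor
  · rintro x ⟨v, hv, hxv⟩
    obtain ⟨z, hz, rfl⟩ := hC.1 hv
    exact hxv.1
  · rintro a ⟨u, hu, hau⟩ b ⟨v, hv, hbv⟩
    by_cases h : u = v
    · subst h
      obtain ⟨z, hz, rfl⟩ := hC.1 hu
      exact mutuallyStable_perturb (equivSeq_symm hau.2) (equivSeq_symm hbv.2)
        ⟨0, equivSeq_refl z⟩
    · exact (hC.2 u hu v hv h).2.2.2 a hau b hbv

end Aux

/-- Theorem 1 / t1.4.1. A set `C` of vertices of the cluster graph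
`G_{X,r̃}` is a maximal clique iff it coincides with some pretangent space
`Ω^X_{∞,r̃}` to `(X,d)` at infinity w.r.t. `r̃`. -/
theorem maximal_clique_iff_pretangent {X : Type*} [MetricSpace X]
    (hX : UnboundedSpace X) (p : X) (r : ℕ → ℝ) (hr : ScalingSeq r)
    (C : Set (Set (ℕ → X))) :
    (IsCliqueCl r p C ∧ ∀ C', IsCliqueCl r p C' → C ⊆ C' → C = C') ↔
      ∃ F : Set (ℕ → X), MaxSelfStable r p F ∧ C = PretangentCl r F := by
  constructor
  · rintro ⟨hC, hmaxC⟩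
    obtain ⟨F, hF, hsub⟩ := exists_maxSelfStable (⋃₀ C) (sUnion_clique_selfStable hC)
    refine ⟨F, hF, ?_⟩
    have hCsub : C ⊆ PretangentCl r F := by
      intro v hv
      obtain ⟨x, hxS, rfl⟩ := hC.1 hv
      have hxF : x ∈ F := hsub ⟨_, hv, ⟨hxS, equivSeq_refl x⟩⟩
      exact ⟨x, hxF, (classOf_eq hF hxF).symm⟩
    exact hmaxC _ (pretangent_isClique hF) hCsub
  · rintro ⟨F, hF, rfl⟩
    refine ⟨pretangent_isClique hF, fun C' hC' hsub => ?_⟩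
    refine le_antisymm hsub fun v hv => ?_
    obtain ⟨y, hyS, rfl⟩ := hC'.1 hv
    have hyF : y ∈ F := by
      refine mem_of_stable_all hF hyS fun z hz => ?_
      have hw : classOf r p z ∈ PretangentCl r F := ⟨z, hz, (classOf_eq hF hz).symm⟩
      have hwC' : classOf r p z ∈ C' := hsub hw
      by_cases h : classOf r p y = classOf r p z
      · have : y ∈ classOf r p z := h ▸ ⟨hyS, equivSeq_refl y⟩
        exact mutuallyStable_symm ⟨0, this.2⟩
      · exact (hC'.2 _ hv _ hwC' h).2.2.2 y ⟨hyS, equivSeq_refl y⟩ z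
          ⟨hF.1.1 hz, equivSeq_refl z⟩
    exact ⟨y, hyF, (classOf_eq hF hyF).symm⟩
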